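/- arXiv:math/0312322 — 3 statements merged into one kernel-verified Lean document; each statement's English description precedes it below -/
import Mathlib

section
/- If g : ℝ → ℝ is a smooth odd function with period 2π, then there exists a continuous conjugation-invariant function φ : SU(2) → ℝ (i.e. φ(U A U⁻¹) = φ(A) for all A, U ∈ SU(2)) such that the function t ↦ φ(d(t)) is differentiable on ℝ with derivative equal to g. -/
noncomputable section

open Matrix Complex Real

/-- `SU2` is the group of 2×2 complex unitary matrices of determinant 1, as a set of matrices. -/
def SU2 : Set (Matrix (Fin 2) (Fin 2) ℂ) :=
  {A | A ∈ Matrix.unitaryGroup (Fin 2) ℂ ∧ A.det = 1}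

/-- `dmat t` is the diagonal matrix with diagonal entries `e^{it}` and `e^{-it}`. -/
def dmat (t : ℝ) : Matrix (Fin 2) (Fin 2) ℂ :=
  !![Complex.exp ((t : ℂ) * Complex.I), 0; 0, Complex.exp (-(t : ℂ) * Complex.I)]


theorem dmat_mul (a b : ℝ) : dmat a * dmat b = dmat (a + b) := by
  simp [dmat, Matrix.mul_fin_two, ← Complex.exp_add]
  ring_nf <;> simp

theorem star_dmat (t : ℝ) : star (dmat t) = dmat (-t) := by
  ext i j
  fin_cases i <;> fin_cases j <;>
    simp [dmat, Matrix.conjTranspose_apply, ← Complex.exp_conj]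

theorem dmat_zero : dmat 0 = 1 := by
  simp [dmat, Matrix.one_fin_two]

theorem dmat_mem (t : ℝ) : dmat t ∈ SU2 := by
  refine ⟨Matrix.mem_unitaryGroup_iff.2 ?_, ?_⟩
  · rw [star_dmat, dmat_mul, add_neg_cancel, dmat_zero]
  · simp [dmat, Matrix.det_fin_two_of, ← Complex.exp_add]

/-- `dsu t` is `dmat t` as an element of `SU2`. -/
def dsu (t : ℝ) : SU2 := ⟨dmat t, dmat_mem t⟩

/-- Given a smooth odd 2π-periodic function g, there is a continuous class-function φ on SU(2)
such that t ↦ φ(d(t)) is differentiable with derivative g. -/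
theorem exists_class_function_with_prescribed_derivative
    (g : ℝ → ℝ) (hg : ContDiff ℝ (⊤ : ℕ∞) g)
    (hodd : ∀ t, g (-t) = -g t) (hper : ∀ t, g (t + 2 * π) = g t) :
    ∃ φ : SU2 → ℝ, Continuous φ ∧
      (∀ U A B : SU2, (B : Matrix (Fin 2) (Fin 2) ℂ) =
        (U : Matrix (Fin 2) (Fin 2) ℂ) * (A : Matrix (Fin 2) (Fin 2) ℂ) *
          (U : Matrix (Fin 2) (Fin 2) ℂ)⁻¹ → φ B = φ A) ∧
      ∀ t : ℝ, HasDerivAt (fun s : ℝ => φ (dsu s)) (g t) t := by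
  
  have hgc : Continuous g := hg.continuous
  set f : ℝ → ℝ := fun t => ∫ s in (0:ℝ)..t, g s with hfdef
  have hfderiv : ∀ t, HasDerivAt f (g t) t := fun t =>
    (hgc.integral_hasStrictDerivAt 0 t).hasDerivAt
  have hfc : Continuous f := continuous_iff_continuousAt.2 fun t => (hfderiv t).continuousAt
  have hgper : Function.Periodic g (2 * π) := hper
  have heven : ∀ t, f (-t) = f t := by
    intro t
    have h1 : (∫ s in (0:ℝ)..t, g (-s)) = ∫ s in (-t)..(0:ℝ), g s := by
      simpa using intervalIntegral.integral_comp_neg (a := (0:ℝ)) (b := t) (f := g)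
    have h2 : (∫ s in (0:ℝ)..t, g (-s)) = -f t := by
      simp only [hodd]
      exact intervalIntegral.integral_neg (f := g) (a := (0:ℝ)) (b := t)
    have h3 : (∫ s in (-t)..(0:ℝ), g s) = -f (-t) := by
      rw [intervalIntegral.integral_symm]
    have := h2.symm.trans (h1.trans h3)
    linarith
  have int0 : (∫ s in (0:ℝ)..(2*π), g s) = 0 := by
    have h1 : (∫ s in (0:ℝ)..(2*π), g s) = ∫ s in (-π)..π, g s := by
      have := hgper.intervalIntegral_add_eq 0 (-π)
      simpa [two_mul] using this
    have h2 : (∫ s in (-π)..(0:ℝ), g s) + ∫ s in (0:ℝ)..π, g s = ∫ s in (-π)..π, g s :=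
      intervalIntegral.integral_add_adjacent_intervals
        (hgc.intervalIntegrable _ _) (hgc.intervalIntegrable _ _)
    have h3 : (∫ s in (-π)..(0:ℝ), g s) = - ∫ s in (0:ℝ)..π, g s := by
      have hc : (∫ s in (0:ℝ)..π, g (-s)) = ∫ s in (-π)..(0:ℝ), g s := by
        simpa using intervalIntegral.integral_comp_neg (a := (0:ℝ)) (b := π) (f := g)
      have hc2 : (∫ s in (0:ℝ)..π, g (-s)) = - ∫ s in (0:ℝ)..π, g s := by
        simp only [hodd]
        simpa using intervalIntegral.integral_neg (f := g) (a := (0:ℝ)) (b := π)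
      linarith
    rw [h1, ← h2]
    linarith
  have fper : Function.Periodic f (2 * π) := by
    intro t
    have h1 : f (t + 2*π) - f t = ∫ s in t..(t + 2*π), g s := by
      rw [hfdef]
      exact intervalIntegral.integral_interval_sub_left
        (hgc.intervalIntegrable _ _) (hgc.intervalIntegrable _ _)
    have h2 : (∫ s in t..(t + 2*π), g s) = ∫ s in (0:ℝ)..(0 + 2*π), g s :=
      hgper.intervalIntegral_add_eq t 0
    rw [zero_add] at h2
    have := h1.trans (h2.trans int0)
    linarith
  have key : ∀ t, f (Real.arccos (Real.cos t)) = f t := by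
    have base : ∀ t ∈ Set.Ico (-π) π, f (Real.arccos (Real.cos t)) = f t := by
      intro t ht
      rcases le_or_gt 0 t with h0 | h0
      · rw [Real.arccos_cos h0 ht.2.le]
      · rw [← Real.cos_neg, Real.arccos_cos (by linarith) (by linarith [ht.1]), heven]
    intro t
    have hp : (0:ℝ) < 2*π := by positivity
    set t' := toIcoMod hp (-π) t with ht'
    have hmem : t' ∈ Set.Ico (-π) (-π + 2*π) := toIcoMod_mem_Ico hp (-π) t
    have hmem' : t' ∈ Set.Ico (-π) π := by
      constructor
      · exact hmem.1
      · have := hmem.2; linarith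
    have hsub0 := toIcoMod_sub_self hp (-π) t
    have hsub : t' = t - (toIcoDiv hp (-π) t : ℝ) * (2*π) := by
      rw [← ht'] at hsub0
      push_cast [zsmul_eq_mul] at hsub0
      linarith
    have hft : f t' = f t := by
      rw [hsub]
      exact fper.sub_int_mul_eq _
    have hct : Real.cos t' = Real.cos t := by
      rw [hsub]
      exact Real.cos_periodic.sub_int_mul_eq _
    rw [← hct, base t' hmem', hft]
  set φ : SU2 → ℝ := fun A =>
    f (Real.arccos (((A : Matrix (Fin 2) (Fin 2) ℂ).trace).re / 2)) with hφ
  refine ⟨φ, ?_, ?_, ?_⟩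
  · apply hfc.comp
    apply Real.continuous_arccos.comp
    apply Continuous.div_const
    apply Complex.continuous_re.comp
    simp only [Matrix.trace_fin_two]
    exact (continuous_subtype_val.matrix_elem 0 0).add (continuous_subtype_val.matrix_elem 1 1)
  · intro U A B hB
    have hU : IsUnit ((U : Matrix (Fin 2) (Fin 2) ℂ).det) := by
      rw [U.2.2]; exact isUnit_one
    have : (B : Matrix (Fin 2) (Fin 2) ℂ).trace = (A : Matrix (Fin 2) (Fin 2) ℂ).trace := by
      rw [hB, Matrix.trace_mul_comm, ← Matrix.mul_assoc, Matrix.nonsing_inv_mul _ hU,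
        Matrix.one_mul]
    simp only [hφ, this]
  · have htrace : ∀ s : ℝ, ((dmat s).trace).re / 2 = Real.cos s := by
      intro s
      have h1 : (dmat s).trace = Complex.exp ((s:ℂ) * Complex.I) +
          Complex.exp (-(s:ℂ) * Complex.I) := by
        rw [Matrix.trace_fin_two]; simp [dmat]
      have h2 : (Complex.exp (-(s:ℂ) * Complex.I)).re = Real.cos s := by
        rw [show -(s:ℂ) = ((-s : ℝ) : ℂ) by push_cast; ring, Complex.exp_ofReal_mul_I_re,
          Real.cos_neg]
      rw [h1]
      simp only [Complex.add_re, Complex.exp_ofReal_mul_I_re, h2]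
      ring
    have hfun : (fun s : ℝ => φ (dsu s)) = f := by
      funext s
      simp only [hφ, dsu, htrace s, key s]
    intro t
    rw [hfun]
    exact hfderiv t
end
end

section
/- If f : ℝ → ℝ is continuous, even (f(−t) = f(t) for all t) and 2π-periodic (f(t + 2π) = f(t) for all t), then there exists a continuous function F : ℝ → ℝ such that f(t) = F(cos t) for all t ∈ ℝ. -/
open Real

/-- A continuous even 2π-periodic function factors continuously through cosine. -/
theorem even_periodic_factors_through_cos
    (f : ℝ → ℝ) (hf : Continuous f)
    (heven : ∀ t, f (-t) = f t) (hper : ∀ t, f (t + 2 * π) = f t) :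
    ∃ F : ℝ → ℝ, Continuous F ∧ ∀ t, f t = F (Real.cos t) := by
  have hP : Function.Periodic f (2 * π) := hper
  have hmul : ∀ (k : ℤ) (x : ℝ), f (2 * k * π + x) = f x := by
    intro k x
    calc f (2 * k * π + x) = f (x + (k : ℤ) • (2 * π)) := by
          congr 1; push_cast [zsmul_eq_mul]; ring
      _ = f x := (hP.zsmul k) x
  refine ⟨f ∘ Real.arccos, hf.comp Real.continuous_arccos, fun t => ?_⟩
  have hc : Real.cos (Real.arccos (Real.cos t)) = Real.cos t :=
    Real.cos_arccos (neg_one_le_cos t) (cos_le_one t)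
  rcases Real.cos_eq_cos_iff.mp hc.symm with ⟨k, h | h⟩
  · simp only [Function.comp_apply]
    rw [h, hmul]
  · simp only [Function.comp_apply]
    rw [h, show 2 * (k : ℝ) * π - t = 2 * (k : ℝ) * π + (-t) by ring, hmul, heven]
end

section
/- Let p and q be coprime positive integers with p/q ≤ 2 and let S ⊆ ℝ² be the piecewise-linear arc with vertices z₁ = (−π, 0), z₂ = (−π, −(1 − p/q)π), z₃ = (0, −π), z₄ = (0, π), z₅ = (π, (1 − p/q)π), z₆ = (π, 0), i.e. the union of the closed segments [z₁,z₂], [z₂,z₃], [z₃,z₄], [z₄,z₅], [z₅,z₆]. Then for every open set U ⊆ ℝ² containing S, there exists a smooth odd function g : ℝ → ℝ with period 2π such that |g(α)| < π for all α ∈ ℝ and such that the point (α, −g(α)) belongs to U for every α ∈ [−π, π]. -/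
open Real Pointwise

lemma aux_seg_snd {x b1 b2 v : ℝ} (h : v ∈ segment ℝ b1 b2) :
    ((x, v) : ℝ × ℝ) ∈ segment ℝ (x, b1) (x, b2) := by
  obtain ⟨s, t, hs, ht, hst, hv⟩ := h
  refine ⟨s, t, hs, ht, hst, ?_⟩
  simp only [Prod.smul_mk, smul_eq_mul, Prod.mk_add_mk, Prod.mk.injEq]
  constructor
  · linear_combination x * hst
  · simpa using hv

lemma aux_neg_seg {u v z : ℝ × ℝ} (h : z ∈ segment ℝ u v) :
    -z ∈ segment ℝ (-u) (-v) := by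
  obtain ⟨s, t, hs, ht, hst, hz⟩ := h
  refine ⟨s, t, hs, ht, hst, ?_⟩
  rw [← hz]
  module

lemma aux_sin_min {u m : ℝ} (hu : 0 ≤ u) (hum : u ≤ m) (hm : m ≤ π - u) :
    Real.sin u ≤ Real.sin m := by
  have hπ := Real.pi_pos
  have hu2 : u ≤ π / 2 := by linarith
  rcases le_or_gt m (π / 2) with h | h
  · exact Real.strictMonoOn_sin.monotoneOn ⟨by linarith, hu2⟩ ⟨by linarith, h⟩ hum
  · rw [← Real.sin_pi_sub m]
    exact Real.strictMonoOn_sin.monotoneOn ⟨by linarith, hu2⟩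
      ⟨by linarith, by linarith⟩ (by linarith)

lemma aux_cos_dist {x y : ℝ} (hx : x ∈ Set.Icc 0 π) (hy : y ∈ Set.Icc 0 π) :
    (x - y) ^ 2 ≤ 5 * |Real.cos x - Real.cos y| := by
  wlog hxy : x ≤ y generalizing x y
  · have h := this hy hx (le_of_not_ge hxy)
    rw [abs_sub_comm] at h
    nlinarith [h]
  obtain ⟨hx0, hxπ⟩ := hx
  obtain ⟨hy0, hyπ⟩ := hy
  have hπ := Real.pi_pos
  set u := (y - x) / 2 with hu_def
  set m := (x + y) / 2 with hm_def
  have hu0 : 0 ≤ u := by rw [hu_def]; linarith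
  have hu2 : u ≤ π / 2 := by rw [hu_def]; linarith
  have hum : u ≤ m := by rw [hu_def, hm_def]; linarith
  have hmπ : m ≤ π - u := by rw [hu_def, hm_def]; linarith
  have h1 : Real.sin u ≤ Real.sin m := aux_sin_min hu0 hum hmπ
  have h2 : 2 / π * u ≤ Real.sin u := Real.mul_le_sin hu0 hu2
  have h2' : 2 * u ≤ π * Real.sin u := by
    rw [div_mul_eq_mul_div, div_le_iff₀ hπ] at h2
    linarith [h2]
  have h2m : 2 * u ≤ π * Real.sin m := by nlinarith [h1]
  have h3 : Real.cos x - Real.cos y = 2 * Real.sin m * Real.sin u := by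
    rw [Real.cos_sub_cos]
    have e1 : (x - y) / 2 = -u := by rw [hu_def]; ring
    have e2 : (x + y) / 2 = m := hm_def.symm
    rw [e1, e2, Real.sin_neg]
    ring
  have hsu0 : 0 ≤ Real.sin u := by nlinarith [h2]
  have hsm0 : 0 ≤ Real.sin m := le_trans hsu0 h1
  have h4 : 0 ≤ Real.cos x - Real.cos y := by nlinarith [h3]
  rw [abs_of_nonneg h4, h3]
  have h5 : (2 * u) * (2 * u) ≤ (π * Real.sin m) * (π * Real.sin u) :=
    mul_le_mul h2m h2' (by linarith) (by positivity)
  have h6 : (x - y) ^ 2 = 4 * u ^ 2 := by rw [hu_def]; ring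
  have hπ2 : π ^ 2 < 10 := by nlinarith [Real.pi_lt_d2, Real.pi_gt_three]
  nlinarith [h5, h6, hπ2, mul_nonneg hsm0 hsu0]

set_option maxHeartbeats 1000000 in
lemma aux_case1 {c δ η ε ψ A α : ℝ} (hc0 : 0 < c) (hc2 : c ≤ 2)
    (hδ0 : 0 < δ) (hδ1 : δ ≤ 1) (hη0 : 0 < η) (hηδ : η ≤ δ) (hη1 : η ≤ 1)
    (hεdef : ε = η ^ 2 / 5)
    (hψdef : ψ = Real.sin α / Real.sqrt (Real.sin α ^ 2 + ε ^ 2))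
    (hψ1 : ψ ≤ 1)
    (hAα : |A - α| ≤ η) (hA0 : 0 ≤ A) (hAπ : A ≤ π)
    (hδα : δ ≤ α) (hαδ : α ≤ π - δ) :
    |ψ * (π - c * A) - (π - c * α)| ≤ 3 * η := by
  have hπ := Real.pi_pos
  have hε0 : 0 < ε := by rw [hεdef]; positivity
  have hsδ : Real.sin δ ≤ Real.sin α := aux_sin_min hδ0.le hδα (by linarith)
  have hδπ2 : δ ≤ π / 2 := by linarith [Real.pi_gt_three]
  have hsδ2 : δ / 2 ≤ Real.sin δ := by
    have h := Real.mul_le_sin hδ0.le hδπ2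
    rw [div_mul_eq_mul_div, div_le_iff₀ hπ] at h
    have hsin0 : 0 ≤ Real.sin δ :=
      Real.sin_nonneg_of_nonneg_of_le_pi hδ0.le (by linarith)
    nlinarith [h, Real.pi_lt_d2, hsin0, hδ0.le]
  have hsα : δ / 2 ≤ Real.sin α := le_trans hsδ2 hsδ
  have hDsq : (Real.sqrt (Real.sin α ^ 2 + ε ^ 2)) ^ 2 = Real.sin α ^ 2 + ε ^ 2 :=
    Real.sq_sqrt (by positivity)
  have hψ0 : 0 ≤ ψ := by
    rw [hψdef]
    exact div_nonneg (by linarith) (Real.sqrt_nonneg _)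
  have hψlow : 1 - ψ ≤ 4 * ε ^ 2 / δ ^ 2 := by
    have hψsq : ψ ^ 2 = Real.sin α ^ 2 / (Real.sin α ^ 2 + ε ^ 2) := by
      rw [hψdef, div_pow, hDsq]
    have h1 : ψ ^ 2 ≤ ψ := by nlinarith [hψ0, hψ1]
    have h2 : 1 - ψ ≤ ε ^ 2 / (Real.sin α ^ 2 + ε ^ 2) := by
      have hpos : (0:ℝ) < Real.sin α ^ 2 + ε ^ 2 := by positivity
      have e : 1 - ψ ^ 2 = ε ^ 2 / (Real.sin α ^ 2 + ε ^ 2) := by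
        rw [hψsq]
        field_simp
        ring
      linarith [h1, e.symm.le, e.le]
    have h3 : ε ^ 2 / (Real.sin α ^ 2 + ε ^ 2) ≤ 4 * ε ^ 2 / δ ^ 2 := by
      rw [div_le_div_iff₀ (by positivity) (by positivity)]
      have hsin2 : δ ^ 2 ≤ 4 * Real.sin α ^ 2 := by nlinarith [hsα, hδ0]
      nlinarith [hsin2, sq_nonneg ε, hε0.le]
    linarith
  have hπcA : |π - c * A| ≤ π := by
    rw [abs_le]
    constructor
    · nlinarith [hA0, hc0.le, hAπ, hc2]
    · nlinarith [hA0, hc0.le]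
  have e1 : ψ * (π - c * A) - (π - c * α) = (ψ - 1) * (π - c * A) + c * (α - A) := by ring
  have b1 : |(ψ - 1) * (π - c * A)| ≤ (4 * ε ^ 2 / δ ^ 2) * π := by
    rw [abs_mul]
    apply mul_le_mul _ hπcA (abs_nonneg _) (by positivity)
    rw [abs_of_nonpos (by linarith : ψ - 1 ≤ 0)]
    linarith [hψlow]
  have b2 : |c * (α - A)| ≤ 2 * η := by
    rw [abs_mul, abs_of_nonneg hc0.le, abs_sub_comm]
    calc c * |A - α| ≤ 2 * |A - α| := mul_le_mul_of_nonneg_right hc2 (abs_nonneg _)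
      _ ≤ 2 * η := by linarith [hAα]
  have hnum : (4 * ε ^ 2 / δ ^ 2) * π ≤ η := by
    have hεδ : ε ^ 2 ≤ η ^ 2 * δ ^ 2 / 25 := by
      have hη2δ2 : η ^ 2 ≤ δ ^ 2 := by nlinarith [hηδ, hη0.le]
      rw [hεdef]
      nlinarith [hη2δ2, sq_nonneg η]
    have h5 : 4 * ε ^ 2 / δ ^ 2 ≤ η ^ 2 * (4 / 25) := by
      rw [div_le_iff₀ (by positivity)]
      nlinarith [hεδ]
    have h8 : η ^ 2 ≤ η := by nlinarith [hη0.le, hη1]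
    have h10 : (4 * ε ^ 2 / δ ^ 2) * π ≤ (η ^ 2 * (4 / 25)) * π :=
      mul_le_mul_of_nonneg_right h5 hπ.le
    nlinarith [h10, Real.pi_lt_d2, sq_nonneg η, h8, hη0.le]
  calc |ψ * (π - c * A) - (π - c * α)|
      = |(ψ - 1) * (π - c * A) + c * (α - A)| := by rw [e1]
    _ ≤ |(ψ - 1) * (π - c * A)| + |c * (α - A)| := abs_add_le _ _
    _ ≤ (4 * ε ^ 2 / δ ^ 2) * π + 2 * η := add_le_add b1 b2
    _ ≤ 3 * η := by linarith [hnum]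

lemma aux_case3 {c δ η ψ A : ℝ} (hc0 : 0 < c) (hc2 : c ≤ 2)
    (hδ0 : 0 < δ) (hη0 : 0 < η) (hψ0 : 0 ≤ ψ) (hψ1 : ψ ≤ 1)
    (hAlow : π - δ - η ≤ A) (hAπ : A ≤ π) :
    min ((1 - c) * π) 0 ≤ ψ * (π - c * A) ∧
      ψ * (π - c * A) ≤ max ((1 - c) * π) 0 + 2 * (δ + η) := by
  have hv_ge : (1 - c) * π ≤ π - c * A := by nlinarith [hAπ, hc0.le]
  have hv_le : π - c * A ≤ (1 - c) * π + 2 * (δ + η) := by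
    nlinarith [hc2, hc0.le, hAlow, hδ0.le, hη0.le]
  constructor
  · rcases le_or_gt 0 (π - c * A) with h | h
    · exact le_trans (min_le_right _ _) (mul_nonneg hψ0 h)
    · exact le_trans (min_le_left _ _) (by nlinarith [hψ1, hv_ge, h])
  · rcases le_or_gt 0 (π - c * A) with h | h
    · have h1 : ψ * (π - c * A) ≤ π - c * A := by nlinarith [hψ0, hψ1, h]
      have h2 : π - c * A ≤ max ((1 - c) * π) 0 + 2 * (δ + η) :=
        le_trans hv_le (add_le_add_left (le_max_left _ _) _)
      linarith
    · have h1 : ψ * (π - c * A) ≤ 0 := mul_nonpos_of_nonneg_of_nonpos hψ0 h.le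
      have h2 : (0:ℝ) ≤ max ((1 - c) * π) 0 + 2 * (δ + η) := by
        have h3 := le_max_right ((1 - c) * π) (0:ℝ)
        linarith
      linarith

/-- The piecewise-linear arc `S` with vertices
z₁ = (−π, 0), z₂ = (−π, −(1 − p/q)π), z₃ = (0, −π), z₄ = (0, π),
z₅ = (π, (1 − p/q)π), z₆ = (π, 0). -/
def arcS (p q : ℕ) : Set (ℝ × ℝ) :=
  segment ℝ (-π, 0) (-π, -((1 - (p : ℝ) / q) * π)) ∪
  segment ℝ (-π, -((1 - (p : ℝ) / q) * π)) (0, -π) ∪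
  segment ℝ (0, -π) (0, π) ∪
  segment ℝ (0, π) (π, (1 - (p : ℝ) / q) * π) ∪
  segment ℝ (π, (1 - (p : ℝ) / q) * π) (π, 0)

set_option maxHeartbeats 1000000 in
/-- Given any open neighborhood U of the arc S, there is a smooth odd 2π-periodic function g
with |g| < π whose graph {(α, −g(α)) : α ∈ [−π, π]} is contained in U. -/
theorem exists_smooth_odd_periodic_graph_in_neighborhood
    (p q : ℕ) (hp : 0 < p) (hq : 0 < q) (hpq : Nat.Coprime p q)
    (hpq2 : (p : ℝ) / q ≤ 2)
    (U : Set (ℝ × ℝ)) (hU : IsOpen U) (hSU : arcS p q ⊆ U) :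
    ∃ g : ℝ → ℝ, ContDiff ℝ (⊤ : ℕ∞) g ∧ (∀ t, g (-t) = -g t) ∧ (∀ t, g (t + 2 * π) = g t) ∧
      (∀ t, |g t| < π) ∧ ∀ t ∈ Set.Icc (-π) π, (t, -g t) ∈ U := by
  have hπ := Real.pi_pos
  obtain ⟨c, hcdef⟩ : ∃ c : ℝ, c = (p : ℝ) / q := ⟨_, rfl⟩
  rw [← hcdef] at hpq2
  have hc0 : 0 < c := by
    rw [hcdef]
    exact div_pos (by exact_mod_cast hp) (by exact_mod_cast hq)
  have hc2 : c ≤ 2 := hpq2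
  -- compactness of the arc and choice of a thickening radius
  have hseg : ∀ u v : ℝ × ℝ, IsCompact (segment ℝ u v) := by
    intro u v
    rw [segment_eq_image]
    exact isCompact_Icc.image (by continuity)
  have hS : IsCompact (arcS p q) :=
    ((((hseg _ _).union (hseg _ _)).union (hseg _ _)).union (hseg _ _)).union (hseg _ _)
  obtain ⟨r, hr0, hrU⟩ := hS.exists_thickening_subset_open hU hSU
  have hmemU : ∀ P : ℝ × ℝ, (∃ Q ∈ arcS p q, dist P Q < r) → P ∈ U := by
    intro P hP
    exact hrU (Metric.mem_thickening_iff.mpr hP)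
  -- constants
  obtain ⟨δ, hδdef⟩ : ∃ δ : ℝ, δ = min (r / 10) 1 := ⟨_, rfl⟩
  have hδ0 : 0 < δ := hδdef ▸ lt_min (by linarith) one_pos
  have hδr : δ ≤ r / 10 := hδdef ▸ min_le_left _ _
  have hδ1 : δ ≤ 1 := hδdef ▸ min_le_right _ _
  obtain ⟨η, hηdef⟩ : ∃ η : ℝ, η = min δ (r / 100) := ⟨_, rfl⟩
  have hη0 : 0 < η := hηdef ▸ lt_min hδ0 (by linarith)
  have hηδ : η ≤ δ := hηdef ▸ min_le_left _ _
  have hηr : η ≤ r / 100 := hηdef ▸ min_le_right _ _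
  have hη1 : η ≤ 1 := hηδ.trans hδ1
  obtain ⟨ε, hεdef⟩ : ∃ ε : ℝ, ε = η ^ 2 / 5 := ⟨_, rfl⟩
  have hε0 : 0 < ε := by rw [hεdef]; positivity
  have hε1 : ε < 1 := by rw [hεdef]; nlinarith [hη1, hη0]
  have hε5 : 5 * ε = η ^ 2 := by rw [hεdef]; ring
  -- the function
  obtain ⟨g, hgdef⟩ : ∃ g : ℝ → ℝ, g = fun t =>
      (Real.sin t / Real.sqrt (Real.sin t ^ 2 + ε ^ 2)) *
        (c * Real.arccos ((1 - ε) * Real.cos t) - π) := ⟨_, rfl⟩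
  have hD0 : ∀ t : ℝ, 0 < Real.sqrt (Real.sin t ^ 2 + ε ^ 2) := fun t =>
    Real.sqrt_pos.mpr (by positivity)
  have hDsq : ∀ t : ℝ, (Real.sqrt (Real.sin t ^ 2 + ε ^ 2)) ^ 2 = Real.sin t ^ 2 + ε ^ 2 :=
    fun t => Real.sq_sqrt (by positivity)
  have hDge : ∀ t : ℝ, |Real.sin t| ≤ Real.sqrt (Real.sin t ^ 2 + ε ^ 2) := by
    intro t
    rw [← Real.sqrt_sq_eq_abs]
    exact Real.sqrt_le_sqrt (by nlinarith [hε0])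
  have hψabs : ∀ t : ℝ, |Real.sin t / Real.sqrt (Real.sin t ^ 2 + ε ^ 2)| < 1 := by
    intro t
    rw [abs_div, abs_of_nonneg (hD0 t).le, div_lt_one (hD0 t), ← Real.sqrt_sq_eq_abs]
    exact Real.sqrt_lt_sqrt (by positivity) (by nlinarith [hε0])
  have hA0 : ∀ t : ℝ, 0 ≤ Real.arccos ((1 - ε) * Real.cos t) := fun t => Real.arccos_nonneg _
  have hAπ : ∀ t : ℝ, Real.arccos ((1 - ε) * Real.cos t) ≤ π := fun t => Real.arccos_le_pi _
  have hfactor : ∀ t : ℝ, |c * Real.arccos ((1 - ε) * Real.cos t) - π| ≤ π := by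
    intro t
    rw [abs_le]
    constructor
    · nlinarith [hA0 t, hc0.le]
    · nlinarith [hAπ t, hA0 t, hc0.le, hc2]
  -- |g| < π
  have habs : ∀ t, |g t| < π := by
    intro t
    simp only [hgdef]
    rw [abs_mul]
    calc |Real.sin t / Real.sqrt (Real.sin t ^ 2 + ε ^ 2)| *
        |c * Real.arccos ((1 - ε) * Real.cos t) - π|
        ≤ |Real.sin t / Real.sqrt (Real.sin t ^ 2 + ε ^ 2)| * π :=
          mul_le_mul_of_nonneg_left (hfactor t) (abs_nonneg _)
      _ < 1 * π := mul_lt_mul_of_pos_right (hψabs t) hπ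
      _ = π := one_mul π
  -- odd
  have hodd : ∀ t, g (-t) = -g t := by
    intro t
    simp only [hgdef, Real.sin_neg, Real.cos_neg]
    ring
  -- periodic
  have hper : ∀ t, g (t + 2 * π) = g t := by
    intro t
    simp only [hgdef, Real.sin_add_two_pi, Real.cos_add_two_pi]
  -- smooth
  have hcd : ContDiff ℝ (⊤ : ℕ∞) g := by
    rw [hgdef]
    apply ContDiff.mul
    · refine ContDiff.div Real.contDiff_sin ?_ fun t => (hD0 t).ne'
      rw [contDiff_iff_contDiffAt]
      intro t
      exact (Real.contDiffAt_sqrt (by positivity : Real.sin t ^ 2 + ε ^ 2 ≠ 0)).comp t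
        (((Real.contDiff_sin.pow 2).add contDiff_const).contDiffAt)
    · refine ContDiff.sub (ContDiff.mul contDiff_const ?_) contDiff_const
      rw [contDiff_iff_contDiffAt]
      intro t
      have hlt : |(1 - ε) * Real.cos t| < 1 := by
        rw [abs_mul, abs_of_nonneg (by linarith : (0:ℝ) ≤ 1 - ε)]
        nlinarith [Real.abs_cos_le_one t, abs_nonneg (Real.cos t), hε0, hε1]
      have h := abs_lt.mp hlt
      exact (Real.contDiffAt_arccos h.1.ne' h.2.ne).comp (f := fun x => (1 - ε) * Real.cos x) t
        ((contDiff_const.mul Real.contDiff_cos).contDiffAt)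
  -- closeness of arccos ((1-ε) cos α) to α on [0, π]
  have hAclose : ∀ α ∈ Set.Icc (0:ℝ) π, |Real.arccos ((1 - ε) * Real.cos α) - α| ≤ η := by
    intro α hα
    have hb1 : -1 ≤ (1 - ε) * Real.cos α := by
      nlinarith [Real.neg_one_le_cos α, Real.cos_le_one α, hε0.le, hε1.le]
    have hb2 : (1 - ε) * Real.cos α ≤ 1 := by
      nlinarith [Real.neg_one_le_cos α, Real.cos_le_one α, hε0.le, hε1.le]
    have hcosA : Real.cos (Real.arccos ((1 - ε) * Real.cos α)) = (1 - ε) * Real.cos α :=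
      Real.cos_arccos hb1 hb2
    have h1 : (Real.arccos ((1 - ε) * Real.cos α) - α) ^ 2 ≤
        5 * |Real.cos (Real.arccos ((1 - ε) * Real.cos α)) - Real.cos α| :=
      aux_cos_dist ⟨hA0 α, hAπ α⟩ hα
    rw [hcosA] at h1
    have h2 : |(1 - ε) * Real.cos α - Real.cos α| = ε * |Real.cos α| := by
      rw [show (1 - ε) * Real.cos α - Real.cos α = -(ε * Real.cos α) by ring, abs_neg,
        abs_mul, abs_of_nonneg hε0.le]
    rw [h2] at h1
    have h3 : (Real.arccos ((1 - ε) * Real.cos α) - α) ^ 2 ≤ η ^ 2 := by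
      nlinarith [Real.abs_cos_le_one α, abs_nonneg (Real.cos α), hε0.le, hε5]
    calc |Real.arccos ((1 - ε) * Real.cos α) - α|
        = Real.sqrt ((Real.arccos ((1 - ε) * Real.cos α) - α) ^ 2) :=
          (Real.sqrt_sq_eq_abs _).symm
      _ ≤ Real.sqrt (η ^ 2) := Real.sqrt_le_sqrt h3
      _ = η := Real.sqrt_sq hη0.le
  -- main estimate on [0, π]
  have hmain : ∀ α ∈ Set.Icc (0:ℝ) π, ∃ Q ∈ arcS p q, dist ((α, -g α) : ℝ × ℝ) Q < r := by
    intro α hα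
    obtain ⟨hα0, hαπ⟩ := hα
    have hgα : g α = (Real.sin α / Real.sqrt (Real.sin α ^ 2 + ε ^ 2)) *
        (c * Real.arccos ((1 - ε) * Real.cos α) - π) := by simp only [hgdef]
    obtain ⟨A, hAdef⟩ : ∃ A : ℝ, A = Real.arccos ((1 - ε) * Real.cos α) := ⟨_, rfl⟩
    obtain ⟨ψ, hψdef⟩ : ∃ ψ : ℝ, ψ = Real.sin α / Real.sqrt (Real.sin α ^ 2 + ε ^ 2) := ⟨_, rfl⟩
    rw [← hAdef, ← hψdef] at hgα
    have hfα : -g α = ψ * (π - c * A) := by rw [hgα]; ring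
    have hψ0 : 0 ≤ ψ := by
      rw [hψdef]
      exact div_nonneg (Real.sin_nonneg_of_nonneg_of_le_pi hα0 hαπ) (hD0 α).le
    have hψ1 : ψ ≤ 1 := by
      have h := (hψabs α).le
      rw [← hψdef] at h
      exact (le_abs_self ψ).trans h
    have hAα : |A - α| ≤ η := by rw [hAdef]; exact hAclose α ⟨hα0, hαπ⟩
    have hA0' : 0 ≤ A := by rw [hAdef]; exact hA0 α
    have hAπ' : A ≤ π := by rw [hAdef]; exact hAπ α
    have hgbd := abs_lt.mp (habs α)
    rcases le_or_gt α δ with hcase | hcase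
    · -- near 0 : use the vertical segment {0} × [-π, π]
      refine ⟨(0, -g α), ?_, ?_⟩
      · have hmem : -g α ∈ segment ℝ (-π) π := by
          rw [segment_eq_uIcc, Set.uIcc_of_le (by linarith : -π ≤ π)]
          exact ⟨by linarith [hgbd.2], by linarith [hgbd.1]⟩
        have h := aux_seg_snd (x := 0) hmem
        exact Set.mem_union_left _ (Set.mem_union_left _ (Set.mem_union_right _ h))
      · rw [Prod.dist_eq]
        apply max_lt
        · rw [Real.dist_eq, sub_zero, abs_of_nonneg hα0]; linarith
        · rw [dist_self]; linarith
    rcases le_or_gt α (π - δ) with hcase2 | hcase2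
    · -- middle : use the segment from (0, π) to (π, (1-c)π)
      refine ⟨(α, π - c * α), ?_, ?_⟩
      · show _ ∈ arcS p q
        unfold arcS
        rw [← hcdef]
        refine Set.mem_union_left _ (Set.mem_union_right _
          ⟨1 - α / π, α / π, ?_, by positivity, by ring, ?_⟩)
        · have : α / π ≤ 1 := (div_le_one hπ).mpr hαπ
          linarith
        · simp only [Prod.smul_mk, smul_eq_mul, Prod.mk_add_mk, Prod.mk.injEq]
          constructor
          · field_simp
            ring
          · field_simp
            ring
      · rw [Prod.dist_eq]
        apply max_lt
        · rw [dist_self]; linarith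
        · rw [Real.dist_eq, hfα]
          have hkey := aux_case1 hc0 hc2 hδ0 hδ1 hη0 hηδ hη1 hεdef hψdef hψ1 hAα hA0' hAπ'
            hcase.le hcase2
          calc |ψ * (π - c * A) - (π - c * α)| ≤ 3 * η := hkey
            _ < r := by linarith [hηr, hr0]
    · -- near π : use the segment from (π, (1-c)π) to (π, 0)
      have hAlow : π - δ - η ≤ A := by
        have h := abs_le.mp hAα
        linarith [h.1]
      obtain ⟨hFge', hFle'⟩ := aux_case3 hc0 hc2 hδ0 hη0 hψ0 hψ1 hAlow hAπ'
      have hFge : min ((1 - c) * π) 0 ≤ -g α := by rw [hfα]; exact hFge'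
      have hFle : -g α ≤ max ((1 - c) * π) 0 + 2 * (δ + η) := by rw [hfα]; exact hFle'
      refine ⟨(π, min (-g α) (max ((1 - c) * π) 0)), ?_, ?_⟩
      · show _ ∈ arcS p q
        unfold arcS
        rw [← hcdef]
        have hmem : min (-g α) (max ((1 - c) * π) 0) ∈ segment ℝ ((1 - c) * π) 0 := by
          rw [segment_eq_uIcc, Set.uIcc, Set.mem_Icc]
          constructor
          · have h1 : min ((1 - c) * π) 0 ≤ min (-g α) (max ((1 - c) * π) 0) :=
              le_min hFge min_le_max
            simpa using h1
          · have h2 : min (-g α) (max ((1 - c) * π) 0) ≤ max ((1 - c) * π) 0 :=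
              min_le_right _ _
            simpa using h2
        exact Set.mem_union_right _ (aux_seg_snd (x := π) hmem)
      · rw [Prod.dist_eq]
        apply max_lt
        · rw [Real.dist_eq, abs_of_nonpos (by linarith : α - π ≤ 0)]
          linarith
        · rw [Real.dist_eq]
          rcases min_cases (-g α) (max ((1 - c) * π) 0) with ⟨hmin, hle⟩ | ⟨hmin, hlt⟩
          · rw [hmin, sub_self, abs_zero]; linarith
          · rw [hmin, abs_of_nonneg (by linarith : (0:ℝ) ≤ -g α - max ((1 - c) * π) 0)]
            linarith [hFle, hδr, hηr]
  -- symmetry of the arc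
  have hSymm : ∀ Q ∈ arcS p q, -Q ∈ arcS p q := by
    intro Q hQ
    unfold arcS at hQ ⊢
    rcases hQ with ((((h | h) | h) | h) | h)
    · have h' := aux_neg_seg h
      simp only [Prod.neg_mk, neg_neg, neg_zero] at h'
      rw [segment_symm] at h'
      exact Set.mem_union_right _ h'
    · have h' := aux_neg_seg h
      simp only [Prod.neg_mk, neg_neg, neg_zero] at h'
      rw [segment_symm] at h'
      exact Set.mem_union_left _ (Set.mem_union_right _ h')
    · have h' := aux_neg_seg h
      simp only [Prod.neg_mk, neg_neg, neg_zero] at h'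
      rw [segment_symm] at h'
      exact Set.mem_union_left _ (Set.mem_union_left _ (Set.mem_union_right _ h'))
    · have h' := aux_neg_seg h
      simp only [Prod.neg_mk, neg_neg, neg_zero] at h'
      rw [segment_symm] at h'
      exact Set.mem_union_left _ (Set.mem_union_left _ (Set.mem_union_left _
        (Set.mem_union_right _ h')))
    · have h' := aux_neg_seg h
      simp only [Prod.neg_mk, neg_neg, neg_zero] at h'
      rw [segment_symm] at h'
      exact Set.mem_union_left _ (Set.mem_union_left _ (Set.mem_union_left _
        (Set.mem_union_left _ h')))
  refine ⟨g, hcd, hodd, hper, habs, ?_⟩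
  intro t ht
  obtain ⟨ht1, ht2⟩ := ht
  rcases le_or_gt 0 t with h | h
  · obtain ⟨Q, hQ, hd⟩ := hmain t ⟨h, ht2⟩
    exact hmemU _ ⟨Q, hQ, hd⟩
  · obtain ⟨Q, hQ, hd⟩ := hmain (-t) ⟨by linarith, by linarith⟩
    have hQ' : -Q ∈ arcS p q := hSymm Q hQ
    have heq : ((t, -g t) : ℝ × ℝ) = -((-t, -g (-t)) : ℝ × ℝ) := by
      simp only [Prod.neg_mk, neg_neg, hodd t]
    have hdist : dist ((t, -g t) : ℝ × ℝ) (-Q) = dist ((-t, -g (-t)) : ℝ × ℝ) Q := by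
      rw [heq, dist_eq_norm, dist_eq_norm, neg_sub_neg, norm_sub_rev]
    exact hmemU _ ⟨-Q, hQ', by rw [hdist]; exact hd⟩
end
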